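/- Let D be a cut-free and lazy derivation of x₁:σ₁,…,xₙ:σₙ ⊢ M:σ in LEM. Then: (1) M is a linear λ-term in normal form (it contains no discard or copy constructs and no redex); (2) |M| ≤ Σᵢ|σᵢ| + |σ|; (3) |D| = |M| + k, where k is the number of occurrences of ∀ and ♯ in σ₁,…,σₙ,σ. -/

import Mathlib

namespace LEMPaper

/-! ## Types of `LEM` -/

/-- Types of `LEM`: raw syntax `σ ::= α | σ ⊸ τ | ∀α.σ | ♯σ`
(type variables in de Bruijn representation).  The grammar of the paper
(exponential types `σ ::= A | ♯σ`, linear types `A ::= α | σ ⊸ A | ∀α.A`) is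
carved out by the predicates `IsLinear` and `IsExp` below. -/
inductive LTy : Type
  | var : ℕ → LTy
  | arr : LTy → LTy → LTy
  | all : LTy → LTy
  | bang : LTy → LTy
  deriving DecidableEq

namespace LTy

def liftRen (ρ : ℕ → ℕ) : ℕ → ℕ
  | 0 => 0
  | n + 1 => ρ n + 1

def rename (ρ : ℕ → ℕ) : LTy → LTy
  | var n => var (ρ n)
  | arr A B => arr (A.rename ρ) (B.rename ρ)
  | all A => all (A.rename (liftRen ρ))
  | bang A => bang (A.rename ρ)

/-- Shift all free type variables up by one. -/
def shift (A : LTy) : LTy := A.rename Nat.succ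

def liftSub (s : ℕ → LTy) : ℕ → LTy
  | 0 => var 0
  | n + 1 => (s n).shift

def substAll (s : ℕ → LTy) : LTy → LTy
  | var n => s n
  | arr A B => arr (A.substAll s) (B.substAll s)
  | all A => all (A.substAll (liftSub s))
  | bang A => bang (A.substAll s)

/-- `A.instTop B` instantiates the outermost bound type variable of `A` with `B`. -/
def instTop (A B : LTy) : LTy :=
  A.substAll (fun n => match n with | 0 => B | m + 1 => var m)

/-- All free type variables are `< d`. -/
def ClosedAt : LTy → ℕ → Prop
  | var n, d => n < d
  | arr A B, d => A.ClosedAt d ∧ B.ClosedAt d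
  | all A, d => A.ClosedAt (d + 1)
  | bang A, d => A.ClosedAt d

/-- `noForall A true` : `A` has no positive occurrence of `∀`;
`noForall A false` : `A` has no negative occurrence of `∀`. -/
def noForall : LTy → Bool → Prop
  | var _, _ => True
  | arr A B, b => A.noForall (!b) ∧ B.noForall b
  | all A, b => b = false ∧ A.noForall b
  | bang A, b => A.noForall b

/-- A type is *lazy* if it contains no negative occurrences of `∀`. -/
def Lazy (A : LTy) : Prop := A.noForall false

/-- The size (number of nodes of the syntax tree) of a type. -/
def size : LTy → ℕ
  | var _ => 1
  | arr A B => A.size + B.size + 1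
  | all A => A.size + 1
  | bang A => A.size + 1

/-- The number of occurrences of `∀` and `♯` in a type. -/
def qmCount : LTy → ℕ
  | var _ => 0
  | arr A B => A.qmCount + B.qmCount
  | all A => A.qmCount + 1
  | bang A => A.qmCount + 1

end LTy

mutual
  /-- Linear types: `A ::= α | σ ⊸ A | ∀α.A`. -/
  inductive LTy.IsLinear : LTy → Prop
    | var (n : ℕ) : LTy.IsLinear (.var n)
    | arr {σ A : LTy} : LTy.IsExp σ → LTy.IsLinear A → LTy.IsLinear (.arr σ A)
    | all {A : LTy} : LTy.IsLinear A → LTy.IsLinear (.all A)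
  /-- Exponential types: `σ ::= A | ♯σ`, where in `♯σ` the type `σ` must be
  closed and without negative occurrences of `∀`. -/
  inductive LTy.IsExp : LTy → Prop
    | lin {A : LTy} : LTy.IsLinear A → LTy.IsExp A
    | bang {σ : LTy} : LTy.IsExp σ → σ.ClosedAt 0 → σ.noForall false →
        LTy.IsExp (.bang σ)
end

/-- Well-formedness of the modal type `♯σ`: `σ` is an exponential type,
closed and without negative occurrences of `∀`. -/
def LTy.BangOk (σ : LTy) : Prop := σ.IsExp ∧ σ.ClosedAt 0 ∧ σ.noForall false

/-! ## Terms of `LEM` -/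

/-- Terms of `LEM` (Definition 4.2), de Bruijn representation:
`M ::= x | λx.M | M N | discard_σ M in N | copy^V_σ M as x,y in N`.
In `copy σ V S B`, `B` is the body (with two bound variables: `1` for the first
copy-variable and `0` for the second one), `S` the copied term, `V` the value
annotation. -/
inductive LTm : Type
  | var : ℕ → LTm
  | app : LTm → LTm → LTm
  | lam : LTm → LTm
  | discard : LTy → LTm → LTm → LTm
  | copy : LTy → LTm → LTm → LTm → LTm
  deriving DecidableEq

namespace LTm

def liftRen (ρ : ℕ → ℕ) : ℕ → ℕ
  | 0 => 0
  | n + 1 => ρ n + 1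

/-- Renaming of free variables (the closed value annotation of `copy` is untouched). -/
def rename (ρ : ℕ → ℕ) : LTm → LTm
  | var n => var (ρ n)
  | app M N => app (M.rename ρ) (N.rename ρ)
  | lam M => lam (M.rename (liftRen ρ))
  | discard σ M N => discard σ (M.rename ρ) (N.rename ρ)
  | copy σ V S B => copy σ V (S.rename ρ) (B.rename (liftRen (liftRen ρ)))

/-- Shift all free variables up by one. -/
def shift (M : LTm) : LTm := M.rename Nat.succ

def liftSub (s : ℕ → LTm) : ℕ → LTm
  | 0 => var 0
  | n + 1 => (s n).shift

/-- Simultaneous capture-avoiding substitution. -/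
def substAll (s : ℕ → LTm) : LTm → LTm
  | var n => s n
  | app M N => app (M.substAll s) (N.substAll s)
  | lam M => lam (M.substAll (liftSub s))
  | discard σ M N => discard σ (M.substAll s) (N.substAll s)
  | copy σ V S B => copy σ V (S.substAll s) (B.substAll (liftSub (liftSub s)))

/-- Capture-avoiding substitution `M[N/n]`; variables above `n` are decremented. -/
def subst (M : LTm) (n : ℕ) (N : LTm) : LTm :=
  M.substAll (fun m => if m < n then var m else if m = n then N else var (m - 1))

/-- Substitute the term `V` for both bound variables of a `copy`-body. -/
def subst2 (B V : LTm) : LTm :=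
  B.substAll (fun m => match m with | 0 => V | 1 => V | n + 2 => var n)

/-- Number of (free) occurrences of the variable `n` in a term. -/
def countFree : LTm → ℕ → ℕ
  | var m, n => if m = n then 1 else 0
  | app M N, n => M.countFree n + N.countFree n
  | lam M, n => M.countFree (n + 1)
  | discard _ M N, n => M.countFree n + N.countFree n
  | copy _ _ S B, n => S.countFree n + B.countFree (n + 2)

/-- A term is closed when it has no free variables. -/
def ClosedTm (M : LTm) : Prop := ∀ n, M.countFree n = 0

/-- Linearity of `LEM` terms (Definition 4.2): every free variable occurs exactly
once, and all bound variables (of `λ` and of `copy`) occur in their scope. -/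
def LinearTm : LTm → Prop
  | var _ => True
  | app M N => M.LinearTm ∧ N.LinearTm ∧ ∀ n, M.countFree n = 0 ∨ N.countFree n = 0
  | lam M => M.LinearTm ∧ M.countFree 0 = 1
  | discard _ M N => M.LinearTm ∧ N.LinearTm ∧
      ∀ n, M.countFree n = 0 ∨ N.countFree n = 0
  | copy _ _ S B => S.LinearTm ∧ B.LinearTm ∧ B.countFree 0 = 1 ∧ B.countFree 1 = 1 ∧
      ∀ n, S.countFree n = 0 ∨ B.countFree (n + 2) = 0

/-- Purity: the term is an ordinary λ-term (no `discard`/`copy` constructs). -/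
def IsPure : LTm → Prop
  | var _ => True
  | app M N => M.IsPure ∧ N.IsPure
  | lam M => M.IsPure
  | discard _ _ _ => False
  | copy _ _ _ _ => False

/-- The size of a term (Definition 4.2); the value annotation of `copy` counts. -/
def size : LTm → ℕ
  | var _ => 1
  | app M N => M.size + N.size + 1
  | lam M => M.size + 1
  | discard _ M N => M.size + N.size + 1
  | copy _ V S B => S.size + B.size + V.size + 1

end LTm

/-- β-reduction on (pure) terms, used to define β-normality of values. -/
inductive PureStep : LTm → LTm → Prop
  | beta (M N : LTm) : PureStep (.app (.lam M) N) (M.subst 0 N)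
  | appL {M M'} (N : LTm) : PureStep M M' → PureStep (.app M N) (.app M' N)
  | appR (M : LTm) {N N'} : PureStep N N' → PureStep (.app M N) (.app M N')
  | lam {M M'} : PureStep M M' → PureStep (.lam M) (.lam M')

/-- A value is a closed linear λ-term (pure, i.e. `discard`/`copy`-free) in
β-normal form. -/
def IsValue (V : LTm) : Prop :=
  V.IsPure ∧ V.LinearTm ∧ V.ClosedTm ∧ ∀ W, ¬ PureStep V W

/-- The one-step reduction relation `→` on terms of `LEM` (Figures 2 and 3):
β-reduction, discarding and copying of values, and the commuting conversions,
all closed under arbitrary contexts. -/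
inductive Step : LTm → LTm → Prop
  -- Figure 2: reduction rules
  | beta (M N : LTm) : Step (.app (.lam M) N) (M.subst 0 N)
  | discardV {V : LTm} (σ : LTy) (M : LTm) :
      IsValue V → Step (.discard σ V M) M
  | copyV {V : LTm} (σ : LTy) (U B : LTm) :
      IsValue V → Step (.copy σ U V B) (B.subst2 V)
  -- Figure 3: commuting conversions
  | discardApp (σ : LTy) (M N P : LTm) :
      Step (.app (.discard σ M N) P) (.discard σ M (.app N P))
  | discardDiscard (σ τ : LTy) (M N P : LTm) :
      Step (.discard σ (.discard τ M N) P) (.discard τ M (.discard σ N P))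
  | copyDiscard (σ τ : LTy) (V M N B : LTm) :
      Step (.copy σ V (.discard τ M N) B) (.discard τ M (.copy σ V N B))
  | copyApp (σ : LTy) (V M B P : LTm) :
      Step (.app (.copy σ V M B) P) (.copy σ V M (.app B (P.rename (· + 2))))
  | discardCopy (σ τ : LTy) (V M N P : LTm) :
      Step (.discard σ (.copy τ V M N) P)
           (.copy τ V M (.discard σ N (P.rename (· + 2))))
  | copyCopy (σ τ : LTy) (U V M N P : LTm) :
      Step (.copy σ U (.copy τ V M N) P)
           (.copy τ V M (.copy σ U N (P.rename (fun n => if n < 2 then n else n + 2))))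
  -- contextual closure
  | appL {M M'} (N : LTm) : Step M M' → Step (.app M N) (.app M' N)
  | appR (M : LTm) {N N'} : Step N N' → Step (.app M N) (.app M N')
  | lamC {M M'} : Step M M' → Step (.lam M) (.lam M')
  | discardL (σ : LTy) {M M'} (N : LTm) : Step M M' → Step (.discard σ M N) (.discard σ M' N)
  | discardR (σ : LTy) (M : LTm) {N N'} : Step N N' → Step (.discard σ M N) (.discard σ M N')
  | copyS (σ : LTy) (V : LTm) {S S'} (B : LTm) : Step S S' → Step (.copy σ V S B) (.copy σ V S' B)
  | copyB (σ : LTy) (V S : LTm) {B B'} : Step B B' → Step (.copy σ V S B) (.copy σ V S B')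

/-! ## The sequent calculus `LEM` -/

/-- The renaming swapping the de Bruijn variables `k` and `k+1`. -/
def swapVar (k : ℕ) (n : ℕ) : ℕ :=
  if n = k then k + 1 else if n = k + 1 then k else n

/-- Term produced by the `cut` rule: substitute `N` (whose variables point into the
first `g` positions) for the variable `0` of `M`, re-addressing the remaining
variables of `M`. -/
def cutTm (g : ℕ) (N M : LTm) : LTm :=
  M.substAll (fun n => match n with
    | 0 => N
    | m + 1 => .var (g + m))

/-- Term produced by the `⊸L` rule: `M[yN/x]`, with the new variable `y` at
position `0`. -/
def arrLTm (g : ℕ) (N M : LTm) : LTm :=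
  M.substAll (fun n => match n with
    | 0 => .app (.var 0) N.shift
    | m + 1 => .var (g + 1 + m))

/-- The type-assignment system `LEM` (Figure 5), as a sequent calculus with
contexts rendered as lists; the implicit exchange of multiset contexts is
rendered by the structural rule `exch` (which is invisible in the paper and
contributes no size).  The rules `prom` (p), `der` (d), `weak` (w) and
`contr` (c) handle the modality `♯`. -/
inductive Der : List LTy → LTm → LTy → Type
  | ax {A : LTy} : A.IsLinear → Der [A] (.var 0) A
  | exch (Γ₁ : List LTy) {σ τ : LTy} {Γ₂ : List LTy} {M : LTm} {C : LTy} :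
      Der (Γ₁ ++ σ :: τ :: Γ₂) M C →
      Der (Γ₁ ++ τ :: σ :: Γ₂) (M.rename (swapVar Γ₁.length)) C
  | cut (Γ : List LTy) {Δ : List LTy} {N M : LTm} {σ τ : LTy} :
      Der Γ N σ → Der (σ :: Δ) M τ →
      Der (Γ ++ Δ) (cutTm Γ.length N M) τ
  | arrR {Γ : List LTy} {M : LTm} {σ B : LTy} :
      B.IsLinear → Der (σ :: Γ) M B → Der Γ (.lam M) (σ.arr B)
  | arrL (Γ : List LTy) {Δ : List LTy} {N M : LTm} {σ B τ : LTy} :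
      B.IsLinear → Der Γ N σ → Der (B :: Δ) M τ →
      Der ((σ.arr B) :: (Γ ++ Δ)) (arrLTm Γ.length N M) τ
  | allR {Γ : List LTy} {M : LTm} {A : LTy} :
      A.IsLinear → Der (Γ.map LTy.shift) M A → Der Γ M (.all A)
  | allL {Γ : List LTy} {M : LTm} {A τ : LTy} (B : LTy) :
      B.IsLinear → Der ((A.instTop B) :: Γ) M τ → Der ((.all A) :: Γ) M τ
  | prom {Γ : List LTy} {M : LTm} {σ : LTy} :
      σ.BangOk → (∀ τ ∈ Γ, ∃ ρ, τ = LTy.bang ρ) → Der Γ M σ → Der Γ M (.bang σ)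
  | der {Γ : List LTy} {M : LTm} {σ τ : LTy} :
      σ.BangOk → Der (σ :: Γ) M τ → Der ((.bang σ) :: Γ) M τ
  | weak {Γ : List LTy} {M : LTm} {σ τ : LTy} :
      σ.BangOk → Der Γ M τ →
      Der ((.bang σ) :: Γ) (.discard σ (.var 0) M.shift) τ
  | contr {Γ : List LTy} {M V : LTm} {σ τ : LTy} :
      σ.BangOk → IsValue V →
      Der ((.bang σ) :: (.bang σ) :: Γ) M τ → Der [] V σ →
      Der ((.bang σ) :: Γ)
        (.copy σ V (.var 0) (M.rename (fun n => if n < 2 then n else n + 1))) τ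

/-- A judgment `x₁:σ₁,…,xₙ:σₙ ⊢ M : τ` is *lazy* when `τ` has no negative
occurrence of `∀` and the `σᵢ` have no positive occurrence of `∀`. -/
def LazyJudg (Γ : List LTy) (τ : LTy) : Prop :=
  τ.noForall false ∧ ∀ σ ∈ Γ, σ.noForall true

namespace Der

/-- A derivation is cut-free when it contains no instance of `cut`. -/
def cutFree : ∀ {Γ M τ}, Der Γ M τ → Prop
  | _, _, _, .ax _ => True
  | _, _, _, .exch _ D => D.cutFree
  | _, _, _, .cut _ _ _ => False
  | _, _, _, .arrR _ D => D.cutFree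
  | _, _, _, .arrL _ _ D₁ D₂ => D₁.cutFree ∧ D₂.cutFree
  | _, _, _, .allR _ D => D.cutFree
  | _, _, _, .allL _ _ D => D.cutFree
  | _, _, _, .prom _ _ D => D.cutFree
  | _, _, _, .der _ D => D.cutFree
  | _, _, _, .weak _ D => D.cutFree
  | _, _, _, .contr _ _ D₁ D₂ => D₁.cutFree ∧ D₂.cutFree

/-- The size of a derivation (Definition 6.2): `1` for an axiom, `+1` for every
rule instance except contraction which counts `+3`; the administrative rule
`exch` (implicit in the multiset contexts of the paper) does not count. -/
def size : ∀ {Γ M τ}, Der Γ M τ → ℕ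
  | _, _, _, .ax _ => 1
  | _, _, _, .exch _ D => D.size
  | _, _, _, .cut _ D₁ D₂ => D₁.size + D₂.size + 1
  | _, _, _, .arrR _ D => D.size + 1
  | _, _, _, .arrL _ _ D₁ D₂ => D₁.size + D₂.size + 1
  | _, _, _, .allR _ D => D.size + 1
  | _, _, _, .allL _ _ D => D.size + 1
  | _, _, _, .prom _ _ D => D.size + 1
  | _, _, _, .der _ D => D.size + 1
  | _, _, _, .weak _ D => D.size + 1
  | _, _, _, .contr _ _ D₁ D₂ => D₁.size + D₂.size + 3

end Der

end LEMPaper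

/-!
Laziness forbids every left rule on `∀` or `♯`: `∀L` puts a positive `∀` into the context, and
so do `d`, `w`, `c`, which put there a type `♯σ` with `σ` closed: the variable ending the right
spine of `σ` must be bound by a `∀` on that spine, which occurs positively. A cut-free lazy
derivation therefore uses only `ax`, `⊸R`, `⊸L`, `∀R` and `p`, and by induction its subject is a
β-normal linear λ-term in which every context variable occurs exactly once; `⊸L` substitutes
the neutral term `y N` for such a variable, adding `|N| + 1` nodes. The size bounds follow rule
by rule: `ax` types its variable with a linear type free of `∀` and `♯` (it occurs in both
polarities), `⊸R` and `⊸L` add one node to the subject, and `∀R` and `p` add one rule to `D`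
and one `∀` or `♯` to the conclusion.
-/

namespace LEMPaper

open Finset

namespace LTy

theorem noForall_rename (A : LTy) (ρ : ℕ → ℕ) (b : Bool) :
    (A.rename ρ).noForall b ↔ A.noForall b := by
  induction A generalizing ρ b <;> simp [rename, noForall, *]

theorem size_rename (A : LTy) (ρ : ℕ → ℕ) : (A.rename ρ).size = A.size := by
  induction A generalizing ρ <;> simp [rename, size, *]

theorem qmCount_rename (A : LTy) (ρ : ℕ → ℕ) : (A.rename ρ).qmCount = A.qmCount := by
  induction A generalizing ρ <;> simp [rename, qmCount, *]

theorem one_le_size (A : LTy) : 1 ≤ A.size := by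
  cases A <;> simp [size]

theorem not_noForall_true_of_closedAt_zero {A : LTy} (hA : A.ClosedAt 0) :
    ¬ A.noForall true := by
  induction A with
  | var n => exact absurd hA (Nat.not_lt_zero n)
  | arr _ _ _ ih => exact fun h => ih hA.2 h.2
  | all _ _ => exact fun h => Bool.noConfusion h.1
  | bang _ ih => exact ih hA

theorem BangOk.not_noForall_true {σ : LTy} (h : σ.BangOk) : ¬ σ.noForall true :=
  not_noForall_true_of_closedAt_zero h.2.1

theorem qmCount_eq_zero_of_isExp {A : LTy} (hA : A.IsExp) (ht : A.noForall true)
    (hf : A.noForall false) : A.qmCount = 0 := by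
  induction A with
  | var _ => rfl
  | arr σ B ihσ ihB =>
      cases hA with
      | lin h => cases h with
        | arr hσ hB => simp only [qmCount, ihσ hσ hf.1 ht.1, ihB (.lin hB) ht.2 hf.2]
  | all _ _ => exact Bool.noConfusion ht.1
  | bang σ _ =>
      rcases hA with ⟨⟨⟩⟩ | ⟨_, hc, _⟩
      exact absurd ht (not_noForall_true_of_closedAt_zero hc)

end LTy

theorem not_lazyJudg_all_cons {A τ : LTy} {Γ : List LTy} : ¬ LazyJudg (.all A :: Γ) τ :=
  fun h => Bool.noConfusion (h.2 _ List.mem_cons_self).1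

theorem not_lazyJudg_bang_cons {σ τ : LTy} {Γ : List LTy} (hσ : σ.BangOk) :
    ¬ LazyJudg (.bang σ :: Γ) τ :=
  fun h => hσ.not_noForall_true (h.2 (.bang σ) List.mem_cons_self)

namespace LTm

theorem liftRen_injective {ρ : ℕ → ℕ} (hρ : Function.Injective ρ) :
    Function.Injective (liftRen ρ) := by
  rintro (_ | a) (_ | b) h <;> simp_all [liftRen, hρ.eq_iff]

theorem countFree_rename_apply {ρ : ℕ → ℕ} (hρ : Function.Injective ρ) (M : LTm) (m : ℕ) :
    (M.rename ρ).countFree (ρ m) = M.countFree m := by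
  induction M generalizing ρ m with
  | var v => simp [rename, countFree, hρ.eq_iff]
  | app _ _ ihM ihN | discard _ _ _ ihM ihN => simp [rename, countFree, ihM hρ, ihN hρ]
  | lam _ ih => exact ih (liftRen_injective hρ) (m + 1)
  | copy _ _ _ _ _ ihS ihB =>
      simp only [rename, countFree, ihS hρ]
      exact congrArg _ (ihB (liftRen_injective (liftRen_injective hρ)) (m + 2))

theorem countFree_rename_of_forall_ne {ρ : ℕ → ℕ} {n : ℕ} (hn : ∀ m, ρ m ≠ n) (M : LTm) :
    (M.rename ρ).countFree n = 0 := by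
  induction M generalizing ρ n with
  | var v => simp [rename, countFree, hn v]
  | app _ _ ihM ihN | discard _ _ _ ihM ihN => simp [rename, countFree, ihM hn, ihN hn]
  | lam _ ih =>
      refine ih (n := n + 1) ?_
      rintro (_ | m) <;> simp [liftRen, hn]
  | copy _ _ _ _ _ ihS ihB =>
      simp only [rename, countFree, ihS hn, zero_add]
      refine ihB ?_
      rintro (_ | _ | m) <;> simp [liftRen, hn]

theorem countFree_rename_eq_zero_or {ρ : ℕ → ℕ} (hρ : Function.Injective ρ) {M N : LTm}
    (h : ∀ n, M.countFree n = 0 ∨ N.countFree n = 0) (n : ℕ) :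
    (M.rename ρ).countFree n = 0 ∨ (N.rename ρ).countFree n = 0 := by
  by_cases hn : ∃ m, ρ m = n
  · obtain ⟨m, rfl⟩ := hn
    simpa only [countFree_rename_apply hρ] using h m
  · exact .inl (countFree_rename_of_forall_ne (not_exists.mp hn) M)

theorem countFree_shift_zero (M : LTm) : M.shift.countFree 0 = 0 :=
  countFree_rename_of_forall_ne Nat.succ_ne_zero M

theorem countFree_shift_succ (M : LTm) (n : ℕ) : M.shift.countFree (n + 1) = M.countFree n :=
  countFree_rename_apply Nat.succ_injective M n

theorem size_rename (M : LTm) (ρ : ℕ → ℕ) : (M.rename ρ).size = M.size := by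
  induction M generalizing ρ <;> simp [rename, size, *]

theorem LinearTm.rename {ρ : ℕ → ℕ} (hρ : Function.Injective ρ) {M : LTm} (hM : M.LinearTm) :
    (M.rename ρ).LinearTm := by
  induction M generalizing ρ with
  | var _ => trivial
  | app _ _ ihM ihN | discard _ _ _ ihM ihN =>
      exact ⟨ihM hρ hM.1, ihN hρ hM.2.1, countFree_rename_eq_zero_or hρ hM.2.2⟩
  | lam _ ih =>
      have hρ₁ := liftRen_injective hρ
      exact ⟨ih hρ₁ hM.1, (countFree_rename_apply hρ₁ _ 0).trans hM.2⟩
  | copy _ _ S B _ ihS ihB =>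
      have hρ₂ := liftRen_injective (liftRen_injective hρ)
      refine ⟨ihS hρ hM.1, ihB hρ₂ hM.2.1, (countFree_rename_apply hρ₂ B 0).trans hM.2.2.1,
        (countFree_rename_apply hρ₂ B 1).trans hM.2.2.2.1, fun n => ?_⟩
      by_cases hn : ∃ m, ρ m = n
      · obtain ⟨m, rfl⟩ := hn
        rw [countFree_rename_apply hρ]
        exact (countFree_rename_apply hρ₂ B (m + 2)).symm ▸ hM.2.2.2.2 m
      · exact .inl (countFree_rename_of_forall_ne (not_exists.mp hn) S)

theorem exists_countFree_eq_zero (M : LTm) : ∃ K, ∀ m, K ≤ m → M.countFree m = 0 := by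
  induction M with
  | var v => exact ⟨v + 1, fun m hm => if_neg (by omega)⟩
  | lam _ ih =>
      obtain ⟨K, hK⟩ := ih
      exact ⟨K, fun m hm => hK (m + 1) (by omega)⟩
  | app _ _ ihM ihN | discard _ _ _ ihM ihN =>
      obtain ⟨K₁, h₁⟩ := ihM
      obtain ⟨K₂, h₂⟩ := ihN
      exact ⟨K₁ + K₂, fun m hm => by simp only [countFree, h₁ m (by omega), h₂ m (by omega)]⟩
  | copy _ _ _ _ _ ihS ihB =>
      obtain ⟨K₁, h₁⟩ := ihS
      obtain ⟨K₂, h₂⟩ := ihB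
      exact ⟨K₁ + K₂, fun m hm => by
        simp only [countFree, h₁ m (by omega), h₂ (m + 2) (by omega)]⟩

theorem countFree_eq_zero_of_lam {M : LTm} {K : ℕ}
    (hK : ∀ m, K ≤ m → (lam M).countFree m = 0) : ∀ m, K + 1 ≤ m → M.countFree m = 0
  | 0, hm => absurd hm (by omega)
  | m + 1, hm => hK m (by omega)

theorem sum_countFree_var_mul {v K : ℕ} (hv : v < K) (f : ℕ → ℕ) :
    ∑ m ∈ range K, (var v).countFree m * f m = f v := by
  rw [sum_eq_single_of_mem v (mem_range.mpr hv) fun m _ hm => by simp [countFree, Ne.symm hm]]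
  simp [countFree]

theorem countFree_substAll {M : LTm} {K : ℕ} (hM : M.IsPure)
    (hK : ∀ m, K ≤ m → M.countFree m = 0) (s : ℕ → LTm) (n : ℕ) :
    (M.substAll s).countFree n = ∑ m ∈ range K, M.countFree m * (s m).countFree n := by
  induction M generalizing s K n with
  | var v =>
      have hv : v < K := by_contra fun h => by simpa [countFree] using hK v (by omega)
      exact (sum_countFree_var_mul hv fun m => (s m).countFree n).symm
  | app M N ihM ihN =>
      have hKM m hm : M.countFree m = 0 := (Nat.add_eq_zero_iff.mp (hK m hm)).1
      have hKN m hm : N.countFree m = 0 := (Nat.add_eq_zero_iff.mp (hK m hm)).2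
      simp only [substAll, countFree, ihM hM.1 hKM, ihN hM.2 hKN, add_mul, sum_add_distrib]
  | lam M ih =>
      rw [substAll, countFree, ih hM (countFree_eq_zero_of_lam hK), sum_range_succ']
      simp [liftSub, countFree, countFree_shift_succ]
  | discard | copy => exact hM.elim

theorem size_substAll {M : LTm} {K : ℕ} (hM : M.IsPure)
    (hK : ∀ m, K ≤ m → M.countFree m = 0) (s : ℕ → LTm) :
    (M.substAll s).size + ∑ m ∈ range K, M.countFree m
      = M.size + ∑ m ∈ range K, M.countFree m * (s m).size := by
  induction M generalizing s K with
  | var v =>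
      have hv : v < K := by_contra fun h => by simpa [countFree] using hK v (by omega)
      have h₁ := sum_countFree_var_mul hv 1
      simp only [mul_one, Pi.one_apply] at h₁
      rw [h₁, sum_countFree_var_mul hv, substAll, size, add_comm]
  | app M N ihM ihN =>
      have hKM m hm : M.countFree m = 0 := (Nat.add_eq_zero_iff.mp (hK m hm)).1
      have hKN m hm : N.countFree m = 0 := (Nat.add_eq_zero_iff.mp (hK m hm)).2
      have eM := ihM hM.1 hKM s
      have eN := ihN hM.2 hKN s
      simp only [substAll, countFree, size, add_mul, sum_add_distrib]
      omega
  | lam M ih =>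
      have e := ih hM (countFree_eq_zero_of_lam hK) (liftSub s)
      simp only [sum_range_succ', liftSub, shift, size_rename, size] at e
      simp only [substAll, size, countFree]
      omega
  | discard | copy => exact hM.elim

theorem countFree_substAll_liftSub_zero {M : LTm} (hM : M.IsPure) (s : ℕ → LTm) :
    (M.substAll (liftSub s)).countFree 0 = M.countFree 0 := by
  obtain ⟨K, hK⟩ := M.exists_countFree_eq_zero
  rw [countFree_substAll hM (K := K + 1) (fun m hm => hK m (by omega)), sum_range_succ']
  simp [liftSub, countFree, countFree_shift_zero]

/-- Instead of disjointness of the substituted terms, it suffices that no variable occurs twice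
in the result: this condition passes to subterms. -/
theorem LinearTm.substAll {M : LTm} (hM : M.IsPure) (hl : M.LinearTm) {s : ℕ → LTm}
    (hs : ∀ m, (s m).LinearTm) (h₁ : ∀ n, (M.substAll s).countFree n ≤ 1) :
    (M.substAll s).LinearTm := by
  induction M generalizing s with
  | var v => exact hs v
  | app M N ihM ihN =>
      refine ⟨ihM hM.1 hl.1 hs fun n => ?_, ihN hM.2 hl.2.1 hs fun n => ?_, fun n => ?_⟩ <;>
        have := h₁ n <;> simp only [LTm.substAll, countFree] at this <;> omega
  | lam M ih =>
      have hs' : ∀ m, (liftSub s m).LinearTm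
        | 0 => trivial
        | m + 1 => (hs m).rename Nat.succ_injective
      have h₀ := countFree_substAll_liftSub_zero (M := M) hM s
      refine ⟨ih hM hl.1 hs' ?_, h₀.trans hl.2⟩
      rintro (_ | n)
      · exact h₀.trans_le hl.2.le
      · exact h₁ n
  | discard | copy => exact hM.elim

end LTm

mutual
  inductive Neutral : LTm → Prop
    | var (n : ℕ) : Neutral (.var n)
    | app {M N : LTm} : Neutral M → BetaNormal N → Neutral (.app M N)
  inductive BetaNormal : LTm → Prop
    | ne {M : LTm} : Neutral M → BetaNormal M
    | lam {M : LTm} : BetaNormal M → BetaNormal (.lam M)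
end

mutual
  theorem Neutral.isPure {M : LTm} : Neutral M → M.IsPure
    | .var _ => trivial
    | .app h₁ h₂ => ⟨h₁.isPure, h₂.isPure⟩
  theorem BetaNormal.isPure {M : LTm} : BetaNormal M → M.IsPure
    | .ne h => h.isPure
    | .lam h => h.isPure
end

mutual
  theorem Neutral.rename (ρ : ℕ → ℕ) {M : LTm} : Neutral M → Neutral (M.rename ρ)
    | .var _ => .var _
    | .app h₁ h₂ => .app (h₁.rename ρ) (h₂.rename ρ)
  theorem BetaNormal.rename (ρ : ℕ → ℕ) {M : LTm} : BetaNormal M → BetaNormal (M.rename ρ)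
    | .ne h => .ne (h.rename ρ)
    | .lam h => .lam (h.rename _)
end

mutual
  theorem Neutral.substAll {s : ℕ → LTm} (hs : ∀ m, Neutral (s m)) {M : LTm} :
      Neutral M → Neutral (M.substAll s)
    | .var n => hs n
    | .app h₁ h₂ => .app (h₁.substAll hs) (h₂.substAll hs)
  theorem BetaNormal.substAll {s : ℕ → LTm} (hs : ∀ m, Neutral (s m)) {M : LTm} :
      BetaNormal M → BetaNormal (M.substAll s)
    | .ne h => .ne (h.substAll hs)
    | .lam h => .lam (h.substAll (s := LTm.liftSub s) fun
        | 0 => .var 0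
        | m + 1 => (hs m).rename _)
end

theorem BetaNormal.not_step {M N : LTm} (hM : BetaNormal M) : ¬ Step M N := by
  intro hs
  induction hs with
  | lamC _ ih => rcases hM with ⟨⟨⟩⟩ | hM; exact ih hM
  | appL _ _ ih => rcases hM with ⟨_ | ⟨hM, _⟩⟩; exact ih (.ne hM)
  | appR _ _ ih => rcases hM with ⟨_ | ⟨_, hN⟩⟩; exact ih hN
  | _ => rcases hM with ⟨⟨⟩ | ⟨⟨⟩, _⟩⟩

structure LinearNormal (M : LTm) (n : ℕ) : Prop where
  nrm : BetaNormal M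
  linear : M.LinearTm
  countFree_eq : ∀ i, M.countFree i = if i < n then 1 else 0

theorem swapVar_swapVar (k i : ℕ) : swapVar k (swapVar k i) = i := by
  unfold swapVar
  split_ifs <;> omega

theorem swapVar_injective (k : ℕ) : Function.Injective (swapVar k) :=
  Function.LeftInverse.injective (swapVar_swapVar k)

def arrSubst (g : ℕ) (N : LTm) : ℕ → LTm
  | 0 => .app (.var 0) N.shift
  | m + 1 => .var (g + 1 + m)

theorem arrLTm_eq_substAll (g : ℕ) (N M : LTm) : arrLTm g N M = M.substAll (arrSubst g N) :=
  rfl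

theorem countFree_arrSubst_zero {g : ℕ} {N : LTm}
    (hN : ∀ i, N.countFree i = if i < g then 1 else 0) (n : ℕ) :
    (arrSubst g N 0).countFree n = if n < g + 1 then 1 else 0 := by
  rcases n with _ | n
  · simp [arrSubst, LTm.countFree, LTm.countFree_shift_zero]
  · simp [arrSubst, LTm.countFree, LTm.countFree_shift_succ, hN]

theorem sum_countFree_arrSubst {g : ℕ} {N : LTm}
    (hN : ∀ i, N.countFree i = if i < g then 1 else 0) (d n : ℕ) :
    ∑ m ∈ range (d + 1), (arrSubst g N m).countFree n = if n < g + d + 1 then 1 else 0 := by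
  induction d with
  | zero => simp [countFree_arrSubst_zero hN]
  | succ d ih =>
      rw [sum_range_succ, ih]
      simp only [arrSubst, LTm.countFree]
      split_ifs <;> omega

theorem sum_size_arrSubst (g : ℕ) (N : LTm) (d : ℕ) :
    ∑ m ∈ range (d + 1), (arrSubst g N m).size = N.size + 2 + d := by
  simp [sum_range_succ', arrSubst, LTm.size, LTm.shift, LTm.size_rename]
  omega

namespace LinearNormal

variable {M : LTm} {n : ℕ}

theorem var_zero : LinearNormal (.var 0) 1 :=
  ⟨.ne (.var 0), trivial, fun i => by simp [LTm.countFree, eq_comm]⟩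

theorem lam (h : LinearNormal M (n + 1)) : LinearNormal (.lam M) n :=
  ⟨.lam h.nrm, ⟨h.linear, by simp [h.countFree_eq]⟩, fun i => by
    simp [LTm.countFree, h.countFree_eq]⟩

theorem rename_swapVar (h : LinearNormal M n) {k : ℕ} (hk : k + 1 < n) :
    LinearNormal (M.rename (swapVar k)) n := by
  refine ⟨h.nrm.rename _, h.linear.rename (swapVar_injective k), fun i => ?_⟩
  rw [← swapVar_swapVar k i, LTm.countFree_rename_apply (swapVar_injective k), h.countFree_eq,
    swapVar_swapVar]
  unfold swapVar
  split_ifs <;> omega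

theorem countFree_eq_zero (h : LinearNormal M n) {i : ℕ} (hi : n ≤ i) : M.countFree i = 0 := by
  simp [h.countFree_eq, hi.not_gt]

theorem countFree_eq_one (h : LinearNormal M n) {i : ℕ} (hi : i ∈ range n) :
    M.countFree i = 1 := by
  simp [h.countFree_eq, mem_range.mp hi]

theorem countFree_substAll (h : LinearNormal M n) (s : ℕ → LTm) (i : ℕ) :
    (M.substAll s).countFree i = ∑ m ∈ range n, (s m).countFree i := by
  rw [LTm.countFree_substAll h.nrm.isPure (fun _ => h.countFree_eq_zero)]
  exact sum_congr rfl fun m hm => by rw [h.countFree_eq_one hm, one_mul]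

theorem size_substAll (h : LinearNormal M n) (s : ℕ → LTm) :
    (M.substAll s).size + n = M.size + ∑ m ∈ range n, (s m).size := by
  have e := LTm.size_substAll h.nrm.isPure (fun _ => h.countFree_eq_zero) s
  rwa [sum_congr rfl fun m hm => h.countFree_eq_one hm, sum_const, card_range, smul_eq_mul,
    mul_one, sum_congr rfl fun m hm => by rw [h.countFree_eq_one hm, one_mul]] at e

theorem size_arrLTm {d : ℕ} (hM : LinearNormal M (d + 1)) (g : ℕ) (N : LTm) :
    (arrLTm g N M).size = M.size + N.size + 1 := by
  have e := hM.size_substAll (arrSubst g N)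
  rw [sum_size_arrSubst, ← arrLTm_eq_substAll] at e
  omega

theorem arrLTm {N : LTm} {g d : ℕ} (hN : LinearNormal N g) (hM : LinearNormal M (d + 1)) :
    LinearNormal (arrLTm g N M) (g + d + 1) := by
  have hcount (i : ℕ) :
      (M.substAll (arrSubst g N)).countFree i = if i < g + d + 1 then 1 else 0 := by
    rw [hM.countFree_substAll, sum_countFree_arrSubst hN.countFree_eq]
  have hneu : ∀ m, Neutral (arrSubst g N m)
    | 0 => .app (.var 0) (hN.nrm.rename _)
    | _ + 1 => .var _
  have hlin : ∀ m, (arrSubst g N m).LinearTm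
    | 0 => ⟨trivial, hN.linear.rename Nat.succ_injective, fun
        | 0 => .inr (LTm.countFree_shift_zero N)
        | _ + 1 => .inl rfl⟩
    | _ + 1 => trivial
  rw [arrLTm_eq_substAll]
  refine ⟨hM.nrm.substAll hneu, hM.linear.substAll hM.nrm.isPure hlin fun i => ?_, hcount⟩
  rw [hcount i]
  split_ifs <;> omega

end LinearNormal

theorem Der.linearNormal_of_cutFree_lazy {Γ : List LTy} {M : LTm} {σ : LTy} (D : Der Γ M σ)
    (hcf : D.cutFree) (hl : LazyJudg Γ σ) :
    LinearNormal M Γ.length ∧ M.size ≤ (Γ.map LTy.size).sum + σ.size ∧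
      D.size = M.size + ((Γ.map LTy.qmCount).sum + σ.qmCount) := by
  induction D with
  | @ax A hA =>
      have h₀ := LTy.qmCount_eq_zero_of_isExp (.lin hA) (hl.2 A List.mem_cons_self) hl.1
      have h₁ := A.one_le_size
      refine ⟨.var_zero, ?_, by simp [Der.size, LTm.size, h₀]⟩
      simp only [LTm.size, List.map_cons, List.map_nil, List.sum_cons, List.sum_nil]
      omega
  | exch Γ₁ D ih =>
      obtain ⟨hM, hsz, hD⟩ := ih hcf ⟨hl.1, fun x hx => hl.2 x (by simp at hx ⊢; tauto)⟩
      have hM' := hM.rename_swapVar (k := Γ₁.length) (by simp)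
      refine ⟨by simpa using hM', ?_, ?_⟩ <;> simp [Der.size, LTm.size_rename] at * <;> omega
  | cut => exact hcf.elim
  | arrR _ D ih =>
      obtain ⟨hM, hsz, hD⟩ := ih hcf ⟨hl.1.2, List.forall_mem_cons.2 ⟨hl.1.1, hl.2⟩⟩
      refine ⟨hM.lam, ?_, ?_⟩ <;> simp [Der.size, LTm.size, LTy.size, LTy.qmCount] at * <;> omega
  | arrL Γ _ D₁ D₂ ih₁ ih₂ =>
      obtain ⟨hσ, hB⟩ := hl.2 _ List.mem_cons_self
      obtain ⟨hN, hszN, hD₁⟩ := ih₁ hcf.1 ⟨hσ, fun x hx => hl.2 x (by simp [hx])⟩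
      obtain ⟨hM, hszM, hD₂⟩ :=
        ih₂ hcf.2 ⟨hl.1, List.forall_mem_cons.2 ⟨hB, fun x hx => hl.2 x (by simp [hx])⟩⟩
      refine ⟨?_, ?_, ?_⟩
      · simpa [Nat.add_right_comm] using hN.arrLTm hM
      all_goals simp [Der.size, hM.size_arrLTm, LTy.size, LTy.qmCount] at *; omega
  | allR _ D ih =>
      obtain ⟨hM, hsz, hD⟩ :=
        ih hcf ⟨hl.1.2, by simpa [LTy.shift, LTy.noForall_rename] using hl.2⟩
      have hsize : LTy.size ∘ LTy.shift = LTy.size := funext fun A => A.size_rename _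
      have hqm : LTy.qmCount ∘ LTy.shift = LTy.qmCount := funext fun A => A.qmCount_rename _
      simp only [List.map_map, hsize, hqm, List.length_map] at hM hsz hD
      refine ⟨hM, ?_, ?_⟩ <;> simp [Der.size, LTy.size, LTy.qmCount] <;> omega
  | allL => exact absurd hl not_lazyJudg_all_cons
  | prom _ _ D ih =>
      obtain ⟨hM, hsz, hD⟩ := ih hcf hl
      refine ⟨hM, ?_, ?_⟩ <;> simp [Der.size, LTy.size, LTy.qmCount] <;> omega
  | der hσ | weak hσ | contr hσ => exact absurd hl (not_lazyJudg_bang_cons hσ)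

/-- Lemma 6.1.(1)-(3): if `D` is a cut-free and lazy derivation
of `x₁:σ₁,…,xₙ:σₙ ⊢ M : σ` in `LEM`, then
(1) `M` is a linear λ-term (no `discard`/`copy`) in normal form;
(2) `|M| ≤ Σᵢ|σᵢ| + |σ|`;
(3) `|D| = |M| + k`, where `k` is the number of occurrences of `∀` and `♯` in
`σ₁,…,σₙ,σ`. -/
theorem cutFree_lazy_derivation_subject_properties
    {Γ : List LTy} {M : LTm} {σ : LTy} (D : Der Γ M σ)
    (hcf : D.cutFree) (hlazy : LazyJudg Γ σ) :
    (M.IsPure ∧ M.LinearTm ∧ ∀ N, ¬ Step M N) ∧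
    M.size ≤ (Γ.map LTy.size).sum + σ.size ∧
    D.size = M.size + ((Γ.map LTy.qmCount).sum + σ.qmCount) := by
  obtain ⟨hM, hsize, hD⟩ := D.linearNormal_of_cutFree_lazy hcf hlazy
  exact ⟨⟨hM.nrm.isPure, hM.linear, fun _ => hM.nrm.not_step⟩, hsize, hD⟩

end LEMPaper
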